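/- arXiv:math/0004105 — 2 statements merged into one kernel-verified Lean document; each statement's English description precedes it below -/
import Mathlib

section
/- Let r₀ > r₁ > ⋯ > rₙ = 1 be positive integers defined by r₀ = r, a₀ = a with gcd(r,a) = 1 and 1 ≤ a < r, and recursively rᵢ = min(rᵢ₋₁ - aᵢ₋₁, aᵢ₋₁), aᵢ = rᵢ₋₁ mod rᵢ. Then ⌊r₀/r₁⌋ + ⌊r₁/r₂⌋ + ⋯ + ⌊rₙ₋₁/rₙ⌋ + 2 ≤ r + 2, with equality if and only if r₁ = 1. -/
/-- One step of the continued-fraction-like recursion: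
`(rᵢ, aᵢ) ↦ (rᵢ₊₁, aᵢ₊₁)` where `rᵢ₊₁ = min (rᵢ - aᵢ) aᵢ` and `aᵢ₊₁ = rᵢ % rᵢ₊₁`. -/
def termStep (p : ℕ × ℕ) : ℕ × ℕ :=
  (min (p.1 - p.2) p.2, p.1 % min (p.1 - p.2) p.2)

/-- `termR r a i = rᵢ` for the recursion starting at `r₀ = r`, `a₀ = a`. -/
def termR (r a i : ℕ) : ℕ := (termStep^[i] (r, a)).1

lemma termR_zero (r a : ℕ) : termR r a 0 = r := rfl

lemma termR_succ (r a i : ℕ) :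
    termR r a (i + 1) = termR (min (r - a) a) (r % min (r - a) a) i := by
  simp [termR, Function.iterate_succ_apply, termStep]

/-- ⌊r₀/r₁⌋ + ⌊r₁/r₂⌋ + ⋯ + ⌊rₙ₋₁/rₙ⌋ + 2 ≤ r + 2, with equality iff r₁ = 1. -/
theorem stmt_0 (r a n : ℕ) (hr : 2 ≤ r) (ha : 1 ≤ a) (har : a < r)
    (hcop : Nat.Coprime r a)
    (hdec : ∀ i < n, termR r a (i + 1) < termR r a i)
    (hend : termR r a n = 1) :
    (∑ i ∈ Finset.range n, termR r a i / termR r a (i + 1)) + 2 ≤ r + 2 ∧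
      ((∑ i ∈ Finset.range n, termR r a i / termR r a (i + 1)) + 2 = r + 2 ↔
        termR r a 1 = 1) := by
  induction n generalizing r a with
  | zero =>
    rw [termR_zero] at hend; omega
  | succ n ih =>
    have h1 : termR r a 1 = min (r - a) a := by
      simp [termR, termStep]
    set r1 := min (r - a) a with hr1def
    have hr1a : r1 ≤ a := min_le_right _ _
    have hr1b : r1 ≤ r - a := min_le_left _ _
    have hr1pos : 1 ≤ r1 := by omega
    -- coprimality of r and r1
    have hco1 : Nat.Coprime r r1 := by
      rcases min_choice (r - a) a with h | h
      · rw [hr1def, h]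
        have hd : Nat.gcd r (r - a) ∣ a := by
          have := Nat.dvd_sub (Nat.gcd_dvd_left r (r - a)) (Nat.gcd_dvd_right r (r - a))
          have hra : r - (r - a) = a := by omega
          rwa [hra] at this
        have : Nat.gcd r (r - a) ∣ Nat.gcd r a :=
          Nat.dvd_gcd (Nat.gcd_dvd_left _ _) hd
        rw [hcop] at this
        exact Nat.dvd_one.mp this
      · rw [hr1def, h]; exact hcop
    rcases eq_or_lt_of_le hr1pos with he | hr1ge2
    · -- r1 = 1 : the sequence is r, 1 and then zeros, so n = 0
      have he : r1 = 1 := he.symm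
      have ht2 : termR r a 2 = 0 := by
        rw [termR_succ, ← hr1def, he]
        simp [termR, termStep, Nat.mod_one]
      have ht3 : termR r a 3 = 0 := by
        rw [termR_succ, ← hr1def, he]
        simp [termR, termStep, Nat.mod_one, Function.iterate_succ_apply]
      have hn0 : n = 0 := by
        by_contra hn
        rcases Nat.lt_or_ge n 2 with h2 | h2
        · have hn1 : n = 1 := by omega
          subst hn1
          have h2' : termR r a 2 = 1 := by simpa using hend
          omega
        · have h3' := hdec 2 (by omega)
          norm_num at h3'
          omega
      subst hn0
      rw [Finset.sum_range_one, termR_zero, h1, he]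
      simp [Nat.div_one]
    · -- r1 ≥ 2 : strict inequality
      have hr1ge2 : 2 ≤ r1 := hr1ge2
      have h2r1 : 2 * r1 ≤ r := by omega
      set a1 := r % r1 with ha1def
      have ha1pos : 1 ≤ a1 := by
        rcases Nat.eq_zero_or_pos a1 with h0 | h
        · exfalso
          have hdvd : r1 ∣ r := Nat.dvd_of_mod_eq_zero h0
          have : r1 ∣ Nat.gcd r r1 := Nat.dvd_gcd hdvd dvd_rfl
          rw [hco1] at this
          have := Nat.dvd_one.mp this
          omega
        · exact h
      have ha1lt : a1 < r1 := Nat.mod_lt _ (by omega)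
      have hcop1 : Nat.Coprime r1 a1 := by
        have hrec : Nat.gcd r1 r = Nat.gcd (r % r1) r1 := Nat.gcd_rec r1 r
        unfold Nat.Coprime
        rw [ha1def, Nat.gcd_comm, ← hrec]
        exact Nat.Coprime.symm hco1
      have hshift : ∀ i, termR r a (i + 1) = termR r1 a1 i := by
        intro i
        rw [termR_succ, ← hr1def, ← ha1def]
      have hdec' : ∀ i < n, termR r1 a1 (i + 1) < termR r1 a1 i := by
        intro i hi
        rw [← hshift, ← hshift]
        exact hdec (i + 1) (by omega)
      have hend' : termR r1 a1 n = 1 := by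
        rw [← hshift]; exact hend
      obtain ⟨hle, _⟩ := ih r1 a1 hr1ge2 ha1pos ha1lt hcop1 hdec' hend'
      have hsum : (∑ i ∈ Finset.range (n + 1), termR r a i / termR r a (i + 1))
          = (∑ i ∈ Finset.range n, termR r1 a1 i / termR r1 a1 (i + 1)) + r / r1 := by
        rw [Finset.sum_range_succ' (fun i => termR r a i / termR r a (i + 1)) n]
        simp only [hshift, termR_zero, h1]
      set S := ∑ i ∈ Finset.range n, termR r1 a1 i / termR r1 a1 (i + 1) with hS
      have hSle : S ≤ r1 := by omega
      set q := r / r1 with hq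
      have hqge2 : 2 ≤ q := by
        rw [hq, Nat.le_div_iff_mul_le (by omega)]
        omega
      have hmod : r1 * q + a1 = r := by
        rw [hq, ha1def]
        exact Nat.div_add_mod r r1
      have hmul : r1 + q ≤ r1 * q := Nat.add_le_mul hr1ge2 hqge2
      have hstrict : S + q + 1 ≤ r := by omega
      rw [hsum, h1]
      constructor
      · omega
      · constructor
        · intro h; omega
        · intro h; omega
end

section
/- Let m_p(r, a) denote the multiplicity of the cyclic quotient surface singularity ℂ²/ℤ_r(a, 1) (equivalently, minus the self-intersection of the fundamental cycle of its minimal resolution). For gcd(r,a) = 1 with 0 < a < r, and r₁ = min(r - a, a), a₁ = r mod r₁: m_p(r, a) + m_p(r, r - a) = ⌊r/r₁⌋ + m_p(r₁, a₁) + m_p(r₁, r₁ - a₁). -/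
/-- Hirzebruch–Jung continued fraction expansion of `r / a`:
`r / a = b₁ - 1/(b₂ - 1/(⋯))` with `bⱼ = ⌈·⌉` at each stage.  `hj r a` is the list
`[b₁, b₂, …]`; for `a = 0` it is the empty list. -/
def hj : ℕ → ℕ → List ℕ
  | _, 0 => []
  | r, (a + 1) => ((r + a) / (a + 1)) :: hj (a + 1) ((r + a) / (a + 1) * (a + 1) - r)
termination_by r a => a
decreasing_by
  have h : (r + a) / (a + 1) * (a + 1) ≤ r + a := Nat.div_mul_le_self _ _
  omega

/-- The multiplicity of the cyclic quotient surface singularity `ℂ²/ℤ_r(a,1)`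
(minus the self-intersection of the fundamental cycle of the minimal resolution):
for `r > 1` it equals `Σ bⱼ - 2(n - 1)` where `r/a = [b₁,…,b_n]` is the
Hirzebruch–Jung continued fraction; for a smooth point (`r ≤ 1`) it is `1`. -/
def multp (r a : ℕ) : ℤ :=
  if r ≤ 1 then 1 else ((hj r a).sum : ℤ) - 2 * (((hj r a).length : ℤ) - 1)

/-! The Hirzebruch–Jung expansion of `r / (r - a)` is that of `a / (r mod a)` preceded by
`⌊r/a⌋ - 1` twos (for `r > 2a` it starts with a `2` followed by the expansion of
`(r - a) / (r - 2a)`), so `m_p(r, r - a) = 1 + m_p(a, r mod a)`.  On the other side, the first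
step of the expansion of `r / a` gives `m_p(r, a) = ⌊r/a⌋ - 1 + m_p(a, a - r mod a)`.  Adding the
two proves the claim for `a ≤ r - a`, and the claim is symmetric under `a ↦ r - a`. -/

lemma hj_succ (r a : ℕ) :
    hj r (a + 1) = (r + a) / (a + 1) :: hj (a + 1) ((r + a) / (a + 1) * (a + 1) - r) := by
  rw [hj]

lemma hj_of_dvd {r a : ℕ} (ha : 0 < a) (h : a ∣ r) : hj r a = [r / a] := by
  obtain ⟨q, rfl⟩ := h
  obtain ⟨b, rfl⟩ := Nat.exists_eq_add_of_lt ha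
  rw [zero_add] at ha ⊢
  have hceil : ((b + 1) * q + b) / (b + 1) = q := by
    apply Nat.div_eq_of_lt_le <;> rw [Nat.mul_comm] <;> simp only [Nat.succ_mul] <;> omega
  rw [hj_succ, hceil, Nat.mul_div_cancel_left _ ha, Nat.mul_comm, Nat.sub_self, hj]

lemma hj_of_not_dvd {r a : ℕ} (ha : 0 < a) (h : ¬ a ∣ r) :
    hj r a = (r / a + 1) :: hj a (a - r % a) := by
  obtain ⟨b, rfl⟩ := Nat.exists_eq_add_of_lt ha
  rw [zero_add] at h ⊢
  have hmod : 0 < r % (b + 1) := Nat.pos_of_ne_zero (mt Nat.dvd_of_mod_eq_zero h)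
  have hdiv := Nat.div_add_mod' r (b + 1)
  have hlt := Nat.mod_lt r (show 0 < b + 1 by omega)
  have hceil : (r + b) / (b + 1) = r / (b + 1) + 1 := by
    apply Nat.div_eq_of_lt_le <;> simp only [Nat.succ_mul] <;> omega
  rw [hj_succ, hceil]
  congr 2
  rw [add_mul]
  omega

lemma hj_ne_nil (r : ℕ) {a : ℕ} (ha : 0 < a) : hj r a ≠ [] := by
  by_cases h : a ∣ r
  · simp [hj_of_dvd ha h]
  · simp [hj_of_not_dvd ha h]

lemma hj_add_self (a : ℕ) {b : ℕ} (hb : 0 < b) :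
    hj (a + b) b = (hj a b).modifyHead (· + 1) := by
  by_cases h : b ∣ a
  · rw [hj_of_dvd hb (Nat.dvd_add_self_right.mpr h), hj_of_dvd hb h, Nat.add_div_right _ hb]
    rfl
  · rw [hj_of_not_dvd hb (mt Nat.dvd_add_self_right.mp h), hj_of_not_dvd hb h,
      Nat.add_div_right _ hb, Nat.add_mod_right]
    rfl

lemma hj_add_of_lt {a b : ℕ} (hb : 0 < b) (hba : b < a) : hj (a + b) a = 2 :: hj a (a - b) := by
  have hmod : (a + b) % a = b := by rw [Nat.add_mod_left, Nat.mod_eq_of_lt hba]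
  have hdiv : (a + b) / a = 1 := by
    rw [Nat.add_comm, Nat.add_div_right _ (by omega), Nat.div_eq_of_lt hba]
  have hnd : ¬ a ∣ a + b := fun h => by
    rw [Nat.dvd_iff_mod_eq_zero, hmod] at h
    omega
  rw [hj_of_not_dvd (by omega) hnd, hdiv, hmod]

lemma multp_of_one_lt {r : ℕ} (a : ℕ) (hr : 1 < r) :
    multp r a = ((hj r a).sum : ℤ) - 2 * (((hj r a).length : ℤ) - 1) := by
  simp [multp, Nat.not_le.mpr hr]

lemma multp_of_le_one {r : ℕ} (a : ℕ) (hr : r ≤ 1) : multp r a = 1 := by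
  simp [multp, hr]

lemma multp_eq_of_hj_eq_cons {r a a' c : ℕ} (hr : 1 < r) (ha : 1 < a)
    (h : hj r a = c :: hj a a') : multp r a = (c : ℤ) - 2 + multp a a' := by
  rw [multp_of_one_lt a hr, multp_of_one_lt a' ha, h, List.sum_cons, List.length_cons]
  push_cast
  ring

lemma multp_one {r : ℕ} (hr : 1 < r) : multp r 1 = r := by
  simp [multp_of_one_lt 1 hr, hj_of_dvd Nat.one_pos (one_dvd r)]

lemma multp_add_self {a b : ℕ} (ha : 1 < a) (hb : 0 < b) : multp (a + b) b = multp a b + 1 := by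
  obtain ⟨c, l, hcl⟩ := List.exists_cons_of_ne_nil (hj_ne_nil a hb)
  rw [multp_of_one_lt b ha, multp_of_one_lt b (by omega), hj_add_self a hb, hcl]
  simp only [List.modifyHead_cons, List.sum_cons, List.length_cons]
  push_cast
  ring

lemma multp_add_of_lt {a b : ℕ} (hb : 0 < b) (hba : b < a) : multp (a + b) a = multp a (a - b) := by
  rw [multp_eq_of_hj_eq_cons (by omega) (by omega) (hj_add_of_lt hb hba)]
  ring

lemma multp_add_eq_one_add_mod {a b : ℕ} (ha : 0 < a) (hb : 0 < b) (hab : Nat.Coprime a b) :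
    multp (a + b) b = 1 + multp a (b % a) := by
  induction b using Nat.strong_induction_on with
  | _ b ih =>
  rcases lt_trichotomy b a with hba | rfl | hab'
  · rw [Nat.mod_eq_of_lt hba, multp_add_self (by omega) hb, add_comm]
  · obtain rfl : b = 1 := (Nat.coprime_self b).mp hab
    rw [multp_one (by norm_num), multp_of_le_one _ le_rfl]
    norm_num
  · obtain ⟨c, rfl⟩ := Nat.exists_eq_add_of_le hab'.le
    have hc : 0 < c := by omega
    have hstep : multp (a + (a + c)) (a + c) = multp (a + c) c := by
      rw [Nat.add_comm a (a + c), multp_add_of_lt ha (by omega), Nat.add_sub_cancel_left]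
    rw [hstep, Nat.add_mod_left, ih c (by omega) hc (Nat.coprime_self_add_right.mp hab)]

lemma multp_eq_div_sub_one_add {r a : ℕ} (hcop : Nat.Coprime r a) (ha : 0 < a) (har : a < r) :
    multp r a = ((r / a : ℕ) : ℤ) - 1 + multp a (a - r % a) := by
  rcases (Nat.one_le_of_lt ha).eq_or_lt with rfl | ha1
  · rw [multp_one (by omega), multp_of_le_one _ le_rfl, Nat.div_one]
    ring
  · have hnd : ¬ a ∣ r := fun h => by
      have := Nat.Coprime.eq_one_of_dvd hcop.symm h
      omega
    rw [multp_eq_of_hj_eq_cons (by omega) ha1 (hj_of_not_dvd ha hnd)]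
    push_cast
    ring

lemma multp_add_multp_sub_of_two_mul_le {r a : ℕ} (hcop : Nat.Coprime r a) (ha : 0 < a)
    (h : 2 * a ≤ r) :
    multp r a + multp r (r - a) = (r / a : ℕ) + multp a (r % a) + multp a (a - r % a) := by
  have hsub := multp_eq_div_sub_one_add hcop ha (by omega)
  obtain ⟨b, rfl⟩ := Nat.exists_eq_add_of_le (show a ≤ r by omega)
  have hb : 0 < b := by omega
  rw [hsub, Nat.add_sub_cancel_left,
    multp_add_eq_one_add_mod ha hb (Nat.coprime_self_add_right.mp hcop.symm), Nat.add_mod_left]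
  ring

/-- `m_p(r, a) + m_p(r, r - a) = ⌊r/r₁⌋ + m_p(r₁, a₁) + m_p(r₁, r₁ - a₁)` where
`r₁ = min (r - a) a` and `a₁ = r mod r₁`. -/
theorem stmt_7 (r a : ℕ) (hcop : Nat.Coprime r a) (ha : 0 < a) (har : a < r) :
    multp r a + multp r (r - a)
      = (r / min (r - a) a : ℕ) +
          multp (min (r - a) a) (r % min (r - a) a) +
          multp (min (r - a) a) (min (r - a) a - r % min (r - a) a) := by
  rcases le_total (2 * a) r with h | h
  · rw [min_eq_right (by omega)]
    exact multp_add_multp_sub_of_two_mul_le hcop ha h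
  · have hcop' : Nat.Coprime r (r - a) := (Nat.coprime_self_sub_right har.le).mpr hcop
    rw [min_eq_left (by omega), add_comm (multp r a)]
    have key := multp_add_multp_sub_of_two_mul_le hcop' (by omega) (by omega)
    rwa [Nat.sub_sub_self har.le] at key
end
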